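/- arXiv:1606.03962 — 4 statements merged into one kernel-verified Lean document; each statement's English description precedes it below -/
import Mathlib

section
/- Let β > 0, γ > 0, d > 0, ν ≥ 0 and R₀ = β/(γ+d) > 1, and set I* = 1 − 1/R₀. Then the 2×2 matrix J_E = [[−d − βI*(1+ν), −d − νβI*], [βI*, 0]] has negative trace and positive determinant; consequently both eigenvalues of J_E have negative real part. -/
/-! The trace is `-d - βI*(1 + ν)` and the determinant is `(d + νβI*) βI*`, where
`βI* = β - (γ + d) > 0` because `R₀ > 1`; both signs follow. The eigenvalues are the roots of
`z² - tr J z + det J`, and a root of `z² - T z + D` with `T < 0 < D` either is real, when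
`z² - T z + D ≥ D > 0` rules out `z ≥ 0`, or is non-real, when its real part is `T / 2`. -/

theorem re_neg_of_sq_sub_mul_add_eq_zero {T D : ℝ} (hT : T < 0) (hD : 0 < D) {z : ℂ}
    (hz : z ^ 2 - T * z + D = 0) : z.re < 0 := by
  have hre : z.re ^ 2 - z.im ^ 2 - T * z.re + D = 0 := by
    simpa [pow_two] using congrArg Complex.re hz
  have him : z.im * (2 * z.re - T) = 0 := by
    have := congrArg Complex.im hz
    simp only [pow_two, Complex.sub_im, Complex.add_im, Complex.mul_im, Complex.ofReal_re,
      Complex.ofReal_im, Complex.zero_im] at this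
    linarith
  rcases mul_eq_zero.mp him with hreal | hcentre
  · by_contra! hnonneg
    rw [hreal] at hre
    nlinarith
  · linarith

theorem mul_one_sub_one_div_div_pos {β c : ℝ} (hβ : 0 < β) (hlt : 1 < β / c) :
    0 < β * (1 - 1 / (β / c)) := by
  have hc : 0 < c := by
    by_contra! hc
    linarith [div_nonpos_of_nonneg_of_nonpos hβ.le hc]
  have hcβ : c < β := (one_lt_div hc).mp hlt
  have hforce : β * (1 - 1 / (β / c)) = β - c := by
    field_simp
  linarith

theorem stmt_4_general (β γ d ν : ℝ) (hβ : 0 < β) (hd : 0 < d) (hν : 0 ≤ ν)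
    (hR : 1 < β / (γ + d)) (I : ℝ) (hI : I = 1 - 1 / (β / (γ + d)))
    (J : Matrix (Fin 2) (Fin 2) ℝ)
    (hJ : J = !![-d - β * I * (1 + ν), -d - ν * β * I; β * I, 0]) :
    J.trace < 0 ∧ 0 < J.det ∧
    ∀ z : ℂ, z ^ 2 - (J.trace : ℂ) * z + (J.det : ℂ) = 0 → z.re < 0 := by
  have hβI : 0 < β * I := hI ▸ mul_one_sub_one_div_div_pos hβ hR
  have htrace : J.trace = -d - β * I * (1 + ν) := by
    rw [hJ, Matrix.trace_fin_two_of]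
    ring
  have hdet : J.det = (d + ν * (β * I)) * (β * I) := by
    rw [hJ, Matrix.det_fin_two_of]
    ring
  have htrace_neg : J.trace < 0 := by
    rw [htrace]
    nlinarith
  have hdet_pos : 0 < J.det := by
    rw [hdet]
    positivity
  exact ⟨htrace_neg, hdet_pos, fun z hz => re_neg_of_sq_sub_mul_add_eq_zero htrace_neg hdet_pos hz⟩

theorem stmt_4 (β γ d ν : ℝ) (hβ : 0 < β) (hγ : 0 < γ) (hd : 0 < d) (hν : 0 ≤ ν)
    (hR : 1 < β / (γ + d)) (I : ℝ) (hI : I = 1 - 1 / (β / (γ + d)))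
    (J : Matrix (Fin 2) (Fin 2) ℝ)
    (hJ : J = !![-d - β * I * (1 + ν), -d - ν * β * I; β * I, 0]) :
    J.trace < 0 ∧ 0 < J.det ∧
    ∀ z : ℂ, z ^ 2 - (J.trace : ℂ) * z + (J.det : ℂ) = 0 → z.re < 0 :=
  stmt_4_general β γ d ν hβ hd hν hR I hI J hJ
end

section
/- Let β, γ > 0, d ≥ 0, R₀ = β/(γ+d). Suppose S, I : [0,∞) → [0,1] are C¹ and satisfy I'(t) = (γ+d)·I(t)·(R₀·S(t) − 1) with R₀ ≤ 1 and S(t) ≤ 1 for all t. Then I is nonincreasing and I(t) converges as t → ∞; moreover if S'(t) = d(1−S(t)) − βI(t)S(t) + η(t) with η(t) → 0 and I(t) → 0, and d > 0, then S(t) → 1. -/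
/-!
`I' = (γ + d) I (R₀ S - 1)` is nonpositive because `R₀ S ≤ R₀ ≤ 1`, so `I` is nonincreasing and,
being nonnegative, converges. For `S`, the gap `y = 1 - S` satisfies `y' ≤ -d y + (β I - η)`
since `β I S ≤ β I`; the forcing term tends to `0`, so for every `ε > 0` the function
`e^{d t} (y t - ε / 2)` is eventually nonincreasing, which gives `y t ≤ ε / 2 + C e^{-d t}`.
-/

open Filter Set Topology

lemma antitoneOn_Ici_of_hasDerivAt_nonpos {f f' : ℝ → ℝ} {a : ℝ}
    (hf : ∀ t ≥ a, HasDerivAt f (f' t) t) (hf' : ∀ t ≥ a, f' t ≤ 0) :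
    AntitoneOn f (Ici a) :=
  antitoneOn_of_hasDerivWithinAt_nonpos (convex_Ici a)
    (fun t ht => (hf t ht).continuousAt.continuousWithinAt)
    (fun t ht => (hf t (interior_subset ht)).hasDerivWithinAt)
    (fun t ht => hf' t (interior_subset ht))

lemma AntitoneOn.exists_tendsto_atTop_of_bddBelow {α β : Type*} [LinearOrder α]
    [ConditionallyCompleteLinearOrder β] [TopologicalSpace β] [OrderTopology β]
    {f : α → β} {a : α} (hf : AntitoneOn f (Ici a)) (hbdd : BddBelow (f '' Ici a)) :
    ∃ l, Tendsto f atTop (𝓝 l) := by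
  have hanti : Antitone fun t => f (max t a) := fun s t hst =>
    hf (le_max_right s a) (le_max_right t a) (max_le_max_right a hst)
  have hrange : range (fun t => f (max t a)) ⊆ f '' Ici a := by
    rintro _ ⟨t, rfl⟩
    exact mem_image_of_mem f (le_max_right t a)
  refine ⟨_, (tendsto_atTop_ciInf hanti (hbdd.mono hrange)).congr' ?_⟩
  filter_upwards [eventually_ge_atTop a] with t ht
  rw [max_eq_left ht]

lemma eventually_le_of_hasDerivAt_le_neg_mul_add {y y' g : ℝ → ℝ} {a d ε : ℝ} (hd : 0 < d)
    (hy : ∀ t ≥ a, HasDerivAt y (y' t) t) (hy' : ∀ t ≥ a, y' t ≤ -d * y t + g t)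
    (hg : Tendsto g atTop (𝓝 0)) (hε : 0 < ε) :
    ∀ᶠ t in atTop, y t ≤ ε := by
  obtain ⟨T, hT⟩ := eventually_atTop.1 <|
    (eventually_ge_atTop a).and (hg.eventually (ge_mem_nhds (by positivity : 0 < d * (ε / 2))))
  set F : ℝ → ℝ := fun t => Real.exp (d * t) * (y t - ε / 2)
  have hF : ∀ t ≥ T, HasDerivAt F
      (d * Real.exp (d * t) * (y t - ε / 2) + Real.exp (d * t) * y' t) t := by
    intro t ht
    have hexp : HasDerivAt (fun t => Real.exp (d * t)) (d * Real.exp (d * t)) t := by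
      simpa [mul_comm] using ((hasDerivAt_id t).const_mul d).exp
    exact hexp.mul ((hy t (hT t ht).1).sub_const _)
  have hF_anti : AntitoneOn F (Ici T) := by
    refine antitoneOn_Ici_of_hasDerivAt_nonpos hF fun t ht => ?_
    have hbound : d * (y t - ε / 2) + y' t ≤ 0 := by
      linarith [hy' t (hT t ht).1, (hT t ht).2]
    calc d * Real.exp (d * t) * (y t - ε / 2) + Real.exp (d * t) * y' t
        = Real.exp (d * t) * (d * (y t - ε / 2) + y' t) := by ring
      _ ≤ 0 := mul_nonpos_of_nonneg_of_nonpos (Real.exp_pos _).le hbound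
  have hdecay : Tendsto (fun t => F T * Real.exp (-(d * t))) atTop (𝓝 0) := by
    simpa using (Real.tendsto_exp_neg_atTop_nhds_zero.comp
      (tendsto_id.const_mul_atTop hd)).const_mul (F T)
  filter_upwards [eventually_ge_atTop T, hdecay.eventually (ge_mem_nhds (half_pos hε))]
    with t ht hsmall
  have hFt : Real.exp (d * t) * (y t - ε / 2) ≤ F T := hF_anti self_mem_Ici ht ht
  have hyt : y t - ε / 2 ≤ F T * Real.exp (-(d * t)) := by
    rw [Real.exp_neg, ← div_eq_mul_inv, le_div_iff₀ (Real.exp_pos _)]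
    linarith
  linarith

lemma tendsto_zero_of_hasDerivAt_le_neg_mul_add {y y' g : ℝ → ℝ} {a d : ℝ} (hd : 0 < d)
    (hy : ∀ t ≥ a, HasDerivAt y (y' t) t) (hy' : ∀ t ≥ a, y' t ≤ -d * y t + g t)
    (hg : Tendsto g atTop (𝓝 0)) (hy₀ : ∀ t ≥ a, 0 ≤ y t) :
    Tendsto y atTop (𝓝 0) := by
  refine tendsto_order.2 ⟨fun b hb => ?_, fun b hb => ?_⟩
  · filter_upwards [eventually_ge_atTop a] with t ht using hb.trans_le (hy₀ t ht)
  · filter_upwards [eventually_le_of_hasDerivAt_le_neg_mul_add hd hy hy' hg (half_pos hb)]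
      with t ht using ht.trans_lt (half_lt_self hb)

theorem stmt_12_general (β γ d : ℝ) (hβ : 0 < β) (hγ : 0 < γ) (hd : 0 ≤ d)
    (R₀ : ℝ) (hR₀ : R₀ = β / (γ + d)) (hR : R₀ ≤ 1)
    (S I : ℝ → ℝ)
    (hIv : ∀ t ≥ (0:ℝ), I t ∈ Set.Icc (0:ℝ) 1)
    (hI : ∀ t ≥ (0:ℝ), HasDerivAt I ((γ + d) * I t * (R₀ * S t - 1)) t)
    (hS1 : ∀ t ≥ (0:ℝ), S t ≤ 1) :
    AntitoneOn I (Set.Ici 0) ∧ (∃ l : ℝ, Filter.Tendsto I Filter.atTop (nhds l)) ∧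
    (∀ η : ℝ → ℝ,
      (∀ t ≥ (0:ℝ), HasDerivAt S (d * (1 - S t) - β * I t * S t + η t) t) →
      Filter.Tendsto η Filter.atTop (nhds 0) →
      Filter.Tendsto I Filter.atTop (nhds 0) →
      0 < d →
      Filter.Tendsto S Filter.atTop (nhds 1)) := by
  have hR₀_nonneg : 0 ≤ R₀ := hR₀ ▸ by positivity
  have hI_anti : AntitoneOn I (Ici 0) := by
    refine antitoneOn_Ici_of_hasDerivAt_nonpos hI fun t ht => ?_
    have hRS : R₀ * S t ≤ 1 := (mul_le_of_le_one_right hR₀_nonneg (hS1 t ht)).trans hR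
    exact mul_nonpos_of_nonneg_of_nonpos (mul_nonneg (by positivity) (hIv t ht).1)
      (sub_nonpos.2 hRS)
  refine ⟨hI_anti, hI_anti.exists_tendsto_atTop_of_bddBelow ⟨0, ?_⟩, ?_⟩
  · rintro _ ⟨t, ht, rfl⟩
    exact (hIv t ht).1
  intro η hS hη hI₀ hd₀
  have hgap : Tendsto (fun t => 1 - S t) atTop (𝓝 0) := by
    refine tendsto_zero_of_hasDerivAt_le_neg_mul_add (g := fun t => β * I t - η t) hd₀
      (fun t ht => (hS t ht).const_sub 1) (fun t ht => ?_) ?_ (fun t ht => sub_nonneg.2 (hS1 t ht))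
    · nlinarith [mul_nonneg (mul_nonneg hβ.le (hIv t ht).1) (sub_nonneg.2 (hS1 t ht))]
    · simpa using (hI₀.const_mul β).sub hη
  simpa using hgap.const_sub 1

theorem stmt_12 (β γ d : ℝ) (hβ : 0 < β) (hγ : 0 < γ) (hd : 0 ≤ d)
    (R₀ : ℝ) (hR₀ : R₀ = β / (γ + d)) (hR : R₀ ≤ 1)
    (S I : ℝ → ℝ)
    (hSv : ∀ t ≥ (0:ℝ), S t ∈ Set.Icc (0:ℝ) 1) (hIv : ∀ t ≥ (0:ℝ), I t ∈ Set.Icc (0:ℝ) 1)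
    (hI : ∀ t ≥ (0:ℝ), HasDerivAt I ((γ + d) * I t * (R₀ * S t - 1)) t)
    (hS1 : ∀ t ≥ (0:ℝ), S t ≤ 1) :
    AntitoneOn I (Set.Ici 0) ∧ (∃ l : ℝ, Filter.Tendsto I Filter.atTop (nhds l)) ∧
    (∀ η : ℝ → ℝ,
      (∀ t ≥ (0:ℝ), HasDerivAt S (d * (1 - S t) - β * I t * S t + η t) t) →
      Filter.Tendsto η Filter.atTop (nhds 0) →
      Filter.Tendsto I Filter.atTop (nhds 0) →
      0 < d →
      Filter.Tendsto S Filter.atTop (nhds 1)) :=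
  stmt_12_general β γ d hβ hγ hd R₀ hR₀ hR S I hIv hI hS1
end

section
/- Let β, γ, d > 0 with R₀ = β/(γ+d) > 1. Suppose S, I : [0,∞) → [0,1] satisfy I'(t) = (γ+d)I(t)(R₀S(t) − 1), I(0) > 0, and for every ε > 0 there is T with S'(t) ≥ d(1−S(t)) − ε for t > T whenever I(t) < ε/β for t > T. Then it is impossible that (S(t), I(t)) → (1, 0) as t → ∞. -/
/-!
Since `I' = g I` with `g = (γ + d)(R₀ S - 1)` bounded, uniqueness of solutions of this linear
equation keeps `I` positive for all time. If `S → 1`, then eventually `R₀ S > 1`, so `I` is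
eventually nondecreasing from a positive value and cannot tend to `0`.
-/

open Filter Set Topology

theorem eqOn_zero_of_hasDerivAt_mul_of_abs_le {f g : ℝ → ℝ} {a b K : ℝ}
    (hf : ∀ t ∈ Icc a b, HasDerivAt f (g t * f t) t) (hg : ∀ t ∈ Icc a b, |g t| ≤ K)
    (hb : f b = 0) : EqOn f 0 (Icc a b) := by
  have hlip : ∀ t ∈ Ioc a b, LipschitzOnWith K.toNNReal (fun x ↦ g t * x) univ := fun t ht ↦
    ((lipschitzWith_smul (g t)).weaken <| by
      rw [← NNReal.coe_le_coe, coe_nnnorm, Real.coe_toNNReal']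
      exact le_max_of_le_left (hg t (Ioc_subset_Icc_self ht))).lipschitzOnWith
  refine ODE_solution_unique_of_mem_Icc_left hlip
    (fun t ht ↦ (hf t ht).continuousAt.continuousWithinAt)
    (fun t ht ↦ (hf t (Ioc_subset_Icc_self ht)).hasDerivWithinAt) (fun _ _ ↦ mem_univ _)
    continuousOn_const
    (fun t _ ↦ by simpa using hasDerivWithinAt_zero (𝕜 := ℝ) (F := ℝ) t (Iic t))
    (fun _ _ ↦ mem_univ _) hb

theorem pos_of_hasDerivAt_mul_of_abs_le {f g : ℝ → ℝ} {a b K : ℝ}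
    (hf : ∀ t ∈ Icc a b, HasDerivAt f (g t * f t) t) (hg : ∀ t ∈ Icc a b, |g t| ≤ K)
    (ha : 0 < f a) : ∀ t ∈ Icc a b, 0 < f t := by
  intro t ht
  by_contra! hft
  obtain ⟨c, hc, hfc⟩ : ∃ c ∈ Icc a t, f c = 0 :=
    intermediate_value_Icc' ht.1
      (fun s hs ↦ (hf s ⟨hs.1, hs.2.trans ht.2⟩).continuousAt.continuousWithinAt) ⟨hft, ha.le⟩
  have hsub : Icc a c ⊆ Icc a b := Icc_subset_Icc_right (hc.2.trans ht.2)
  have := eqOn_zero_of_hasDerivAt_mul_of_abs_le (fun s hs ↦ hf s (hsub hs))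
    (fun s hs ↦ hg s (hsub hs)) hfc (left_mem_Icc.2 hc.1)
  simp only [Pi.zero_apply] at this
  linarith

lemma abs_mul_sub_one_le_of_mem_Icc {r s : ℝ} (hs : s ∈ Icc (0 : ℝ) 1) :
    |r * s - 1| ≤ |r| + 1 :=
  calc |r * s - 1| ≤ |r| * |s| + 1 := by simpa [abs_mul] using abs_sub (r * s) 1
    _ ≤ |r| + 1 := by
      gcongr
      rw [abs_of_nonneg hs.1]
      exact mul_le_of_le_one_right (abs_nonneg r) hs.2

theorem stmt_17_general (γ d : ℝ) (hγ : 0 < γ) (hd : 0 < d)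
    (R₀ : ℝ) (hR : 1 < R₀)
    (S I : ℝ → ℝ)
    (hSv : ∀ t ≥ (0:ℝ), S t ∈ Set.Icc (0:ℝ) 1)
    (hI : ∀ t ≥ (0:ℝ), HasDerivAt I ((γ + d) * I t * (R₀ * S t - 1)) t)
    (hI0 : 0 < I 0) :
    ¬ Filter.Tendsto (fun t => (S t, I t)) Filter.atTop (nhds ((1:ℝ), (0:ℝ))) := by
  intro h
  have hI' : ∀ t ≥ (0:ℝ), HasDerivAt I ((γ + d) * (R₀ * S t - 1) * I t) t := fun t ht ↦ by
    simpa only [mul_right_comm] using hI t ht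
  have hpos : ∀ t ≥ (0:ℝ), 0 < I t := fun t ht ↦
    pos_of_hasDerivAt_mul_of_abs_le (a := 0) (b := t) (K := (γ + d) * (|R₀| + 1))
      (fun s hs ↦ hI' s hs.1) (fun s hs ↦ by
        rw [abs_mul, abs_of_pos (by positivity)]
        gcongr
        exact abs_mul_sub_one_le_of_mem_Icc (hSv s hs.1))
      hI0 t ⟨ht, le_rfl⟩
  have hRS : Tendsto (fun t ↦ R₀ * S t) atTop (𝓝 R₀) := by
    simpa using h.fst_nhds.const_mul R₀
  obtain ⟨T, hT⟩ := eventually_atTop.1 ((hRS.eventually (eventually_gt_nhds hR)).and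
    (eventually_ge_atTop 0))
  have hmono : MonotoneOn I (Ici T) := by
    refine monotoneOn_of_hasDerivWithinAt_nonneg (convex_Ici T)
      (fun t ht ↦ (hI t (hT t ht).2).continuousAt.continuousWithinAt)
      (fun t ht ↦ (hI t (hT t (interior_subset ht)).2).hasDerivWithinAt) fun t ht ↦ ?_
    obtain ⟨hRSt, ht0⟩ := hT t (interior_subset ht)
    have hIt := hpos t ht0
    exact mul_nonneg (by positivity) (by linarith)
  obtain ⟨t, hlt, hge⟩ := ((h.snd_nhds.eventually
    (eventually_lt_nhds (hpos T (hT T le_rfl).2))).and (eventually_ge_atTop T)).exists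
  exact (hmono self_mem_Ici hge hge).not_gt hlt

theorem stmt_17 (β γ d : ℝ) (hβ : 0 < β) (hγ : 0 < γ) (hd : 0 < d)
    (R₀ : ℝ) (hR₀ : R₀ = β / (γ + d)) (hR : 1 < R₀)
    (S I : ℝ → ℝ)
    (hSv : ∀ t ≥ (0:ℝ), S t ∈ Set.Icc (0:ℝ) 1) (hIv : ∀ t ≥ (0:ℝ), I t ∈ Set.Icc (0:ℝ) 1)
    (hSdiff : ∀ t ≥ (0:ℝ), DifferentiableAt ℝ S t)
    (hI : ∀ t ≥ (0:ℝ), HasDerivAt I ((γ + d) * I t * (R₀ * S t - 1)) t)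
    (hI0 : 0 < I 0)
    (hcomp : ∀ ε > (0:ℝ), ∃ T : ℝ, (∀ t > T, I t < ε / β) →
      ∀ t > T, d * (1 - S t) - ε ≤ deriv S t) :
    ¬ Filter.Tendsto (fun t => (S t, I t)) Filter.atTop (nhds ((1:ℝ), (0:ℝ))) :=
  stmt_17_general γ d hγ hd R₀ hR S I hSv hI hI0
end

section
/- Let d > 0, ν ≥ 0, β, γ > 0, τ > 0, and let S, I : [−τ,∞) → ℝ be continuous, C¹ on [0,∞), solving the delayed system S' = d(1−S) − βIS + I(t−τ)(γ + νβ(1−S(t−τ)−I(t−τ)))exp(−dτ − νβ∫_{t−τ}^t I(u)du), I' = βIS − (γ+d)I. Define A(t) = 1 − S(t) − I(t) − ∫_{t−τ}^{t}(γ + νβ(1−S(u)−I(u)))I(u)·exp(−∫_u^t (d + νβI(z))dz) du. Then A'(t) = −(d + νβI(t))·A(t) for all t ≥ 0; in particular A(0) ≥ 0 implies A(t) ≥ 0 for all t ≥ 0. -/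
/-!
With `G` a primitive of `d + νβI`, the kernel `exp (-∫ z in u..t, d + νβI z)` factors as
`exp (-G t) * exp (G u)`, so the memory integral of `A` is `exp (-G t)` times a difference of
primitives. Its derivative is `f t - f (t - τ) * exp (-∫ z in (t - τ)..t, d + νβI z)` minus
`(d + νβI t)` times the integral itself, where `f = (γ + νβ(1 - S - I)) I`; the boundary term at
`t - τ` is exactly the delayed inflow in `S'`, and everything else cancels down to
`A' = -(d + νβI) A`. This linear equation integrates to
`A t = A 0 * exp (-∫ s in 0..t, d + νβI s)`.
-/

open Real intervalIntegral

theorem eq_mul_exp_integral_of_hasDerivAt {A a : ℝ → ℝ} {t₀ t : ℝ} (ha : Continuous a)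
    (hA : ∀ s ≥ t₀, HasDerivAt A (a s * A s) s) (ht : t₀ ≤ t) :
    A t = A t₀ * exp (∫ s in t₀..t, a s) := by
  set E : ℝ → ℝ := fun s => ∫ r in t₀..s, a r
  have hE (s : ℝ) : HasDerivAt E (a s) s :=
    integral_hasDerivAt_right (ha.intervalIntegrable _ _) (ha.stronglyMeasurableAtFilter _ _)
      ha.continuousAt
  have hB (s : ℝ) (hs : t₀ ≤ s) :
      HasDerivAt (fun r => A r * exp (-E r)) 0 s := by
    refine ((hA s hs).mul (hE s).neg.exp).congr_deriv ?_
    ring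
  have hBconst : A t * exp (-E t) = A t₀ * exp (-E t₀) :=
    constant_of_has_deriv_right_zero
      (fun s hs => (hB s hs.1).continuousAt.continuousWithinAt)
      (fun s hs => (hB s hs.1).hasDerivWithinAt) t ⟨ht, le_rfl⟩
  simp only [E, integral_same, neg_zero, exp_zero, mul_one] at hBconst
  rw [← hBconst, mul_assoc, ← exp_add, neg_add_cancel, exp_zero, mul_one]

theorem hasDerivAt_integral_mul_exp_neg_integral {f g : ℝ → ℝ} (hf : Continuous f)
    (hg : Continuous g) (τ t : ℝ) :
    HasDerivAt (fun t => ∫ u in (t - τ)..t, f u * exp (-∫ z in u..t, g z))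
      (f t - f (t - τ) * exp (-∫ z in (t - τ)..t, g z)
        - g t * ∫ u in (t - τ)..t, f u * exp (-∫ z in u..t, g z)) t := by
  set G : ℝ → ℝ := fun t => ∫ z in (0 : ℝ)..t, g z
  have hG (t : ℝ) : HasDerivAt G (g t) t :=
    integral_hasDerivAt_right (hg.intervalIntegrable _ _) (hg.stronglyMeasurableAtFilter _ _)
      hg.continuousAt
  have hGsub (u t : ℝ) : ∫ z in u..t, g z = G t - G u :=
    (integral_interval_sub_left (hg.intervalIntegrable _ _) (hg.intervalIntegrable _ _)).symm
  set φ : ℝ → ℝ := fun u => f u * exp (G u)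
  have hφ : Continuous φ :=
    hf.mul (continuous_exp.comp (continuous_iff_continuousAt.2 fun t => (hG t).continuousAt))
  set Φ : ℝ → ℝ := fun t => ∫ u in (0 : ℝ)..t, φ u
  have hΦ (t : ℝ) : HasDerivAt Φ (φ t) t :=
    integral_hasDerivAt_right (hφ.intervalIntegrable _ _) (hφ.stronglyMeasurableAtFilter _ _)
      hφ.continuousAt
  have hfactor (t : ℝ) : ∫ u in (t - τ)..t, f u * exp (-∫ z in u..t, g z)
      = exp (-G t) * (Φ t - Φ (t - τ)) := by
    rw [integral_interval_sub_left (hφ.intervalIntegrable _ _) (hφ.intervalIntegrable _ _),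
      ← integral_const_mul]
    refine integral_congr fun u _ => ?_
    rw [hGsub u t, neg_sub, sub_eq_add_neg, exp_add]
    ring
  rw [funext hfactor, hfactor t, hGsub]
  refine ((hG t).neg.exp.mul ((hΦ t).sub ((hΦ (t - τ)).comp_sub_const t τ))).congr_deriv ?_
  simp only [φ, Pi.neg_apply, Pi.sub_apply, sub_eq_add_neg, exp_add, exp_neg]
  field_simp
  ring

theorem stmt_18_general (d ν β γ τ : ℝ)
    (S I : ℝ → ℝ) (hSc : Continuous S) (hIc : Continuous I)
    (hS : ∀ t ≥ (0:ℝ), HasDerivAt S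
      (d * (1 - S t) - β * I t * S t +
        I (t - τ) * (γ + ν * β * (1 - S (t - τ) - I (t - τ))) *
          Real.exp (-d * τ - ν * β * ∫ u in (t - τ)..t, I u)) t)
    (hI : ∀ t ≥ (0:ℝ), HasDerivAt I (β * I t * S t - (γ + d) * I t) t)
    (A : ℝ → ℝ)
    (hA : A = fun t => 1 - S t - I t -
      ∫ u in (t - τ)..t, (γ + ν * β * (1 - S u - I u)) * I u *
        Real.exp (-(∫ z in u..t, d + ν * β * I z))) :
    (∀ t ≥ (0:ℝ), HasDerivAt A (-(d + ν * β * I t) * A t) t) ∧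
    (0 ≤ A 0 → ∀ t ≥ (0:ℝ), 0 ≤ A t) := by
  have hrate : Continuous fun z => d + ν * β * I z := by fun_prop
  have hdelay (t : ℝ) : -d * τ - ν * β * ∫ u in (t - τ)..t, I u
      = -∫ z in (t - τ)..t, d + ν * β * I z := by
    rw [integral_add intervalIntegrable_const ((hIc.intervalIntegrable _ _).const_mul _),
      integral_const, integral_const_mul, smul_eq_mul]
    ring
  have hderiv (t : ℝ) (ht : 0 ≤ t) : HasDerivAt A (-(d + ν * β * I t) * A t) t := by
    subst hA
    have hkernel := hasDerivAt_integral_mul_exp_neg_integral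
      (f := fun u => (γ + ν * β * (1 - S u - I u)) * I u) (by fun_prop) hrate τ t
    refine ((((hasDerivAt_const t 1).sub (hS t ht)).sub (hI t ht)).sub hkernel).congr_deriv ?_
    rw [hdelay]
    ring
  refine ⟨hderiv, fun hA0 t ht => ?_⟩
  rw [eq_mul_exp_integral_of_hasDerivAt (by fun_prop) hderiv ht]
  exact mul_nonneg hA0 (exp_pos _).le

theorem stmt_18 (d ν β γ τ : ℝ) (hd : 0 < d) (hν : 0 ≤ ν) (hβ : 0 < β) (hγ : 0 < γ)
    (hτ : 0 < τ)
    (S I : ℝ → ℝ) (hSc : Continuous S) (hIc : Continuous I)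
    (hS : ∀ t ≥ (0:ℝ), HasDerivAt S
      (d * (1 - S t) - β * I t * S t +
        I (t - τ) * (γ + ν * β * (1 - S (t - τ) - I (t - τ))) *
          Real.exp (-d * τ - ν * β * ∫ u in (t - τ)..t, I u)) t)
    (hI : ∀ t ≥ (0:ℝ), HasDerivAt I (β * I t * S t - (γ + d) * I t) t)
    (A : ℝ → ℝ)
    (hA : A = fun t => 1 - S t - I t -
      ∫ u in (t - τ)..t, (γ + ν * β * (1 - S u - I u)) * I u *
        Real.exp (-(∫ z in u..t, d + ν * β * I z))) :
    (∀ t ≥ (0:ℝ), HasDerivAt A (-(d + ν * β * I t) * A t) t) ∧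
    (0 ≤ A 0 → ∀ t ≥ (0:ℝ), 0 ≤ A t) :=
  stmt_18_general d ν β γ τ S I hSc hIc hS hI A hA
end
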